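/- Let n be odd, let u be a type α Dyck word of length n−1, and set A₁ = 1u (a string of length n). If B = w0 where w is a Dyck word of length n−1 with w ≠ u, then A₁ and B are non-overlapping strings. -/

import Mathlib

/-- number of 1's in a binary word (1 = `true`) -/
def ones (w : List Bool) : ℕ := w.count true

/-- number of 0's in a binary word (0 = `false`) -/
def zeros (w : List Bool) : ℕ := w.count false

/-- Dyck word: equally many 1's and 0's, every prefix has at least as many 1's as 0's. -/
def IsDyck (w : List Bool) : Prop :=
  ones w = zeros w ∧ ∀ γ : List Bool, γ <+: w → zeros γ ≤ ones γ

/-- type α Dyck word: a Dyck word all of whose nonempty proper prefixes have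
strictly more 1's than 0's. -/
def IsAlphaDyck (v : List Bool) : Prop :=
  IsDyck v ∧ ∀ γ : List Bool, γ <+: v → γ ≠ [] → γ ≠ v → zeros γ < ones γ

/-- two strings are non-overlapping: no nonempty proper prefix of either equals a
nonempty proper suffix of the other. -/
def NonOverlapping (x y : List Bool) : Prop :=
  ∀ s : List Bool, s ≠ [] →
    ¬(s <+: x ∧ s ≠ x ∧ s <:+ y ∧ s ≠ y) ∧
    ¬(s <+: y ∧ s ≠ y ∧ s <:+ x ∧ s ≠ x)

/-!
A nonempty prefix of `1u` has more 1's than 0's, while a nonempty suffix of `w0` has more 0's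
than 1's, so no word is both. Conversely, a proper prefix of `w0` is a prefix of the Dyck word `w`,
so it has at least as many 1's as 0's; a proper suffix of `1u` other than `u` itself is a proper
suffix of the type α word `u`, so it has more 0's than 1's. The remaining candidate `u` is ruled
out because it would be a prefix of `w` of the same length, i.e. `w = u`.
-/

lemma ones_append (x y : List Bool) : ones (x ++ y) = ones x + ones y := List.count_append ..

lemma zeros_append (x y : List Bool) : zeros (x ++ y) = zeros x + zeros y := List.count_append ..

lemma IsDyck.zeros_lt_ones_of_prefix_true_cons {u s : List Bool} (hu : IsDyck u)
    (hs : s <+: true :: u) (hne : s ≠ []) : zeros s < ones s := by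
  obtain ⟨γ, rfl, hγ⟩ := (List.prefix_cons_iff.1 hs).resolve_left hne
  simpa [ones, zeros, Nat.lt_succ_iff] using hu.2 γ hγ

lemma IsDyck.ones_lt_zeros_of_suffix_append_false {w s : List Bool} (hw : IsDyck w)
    (hs : s <:+ w ++ [false]) (hne : s ≠ []) : ones s < zeros s := by
  obtain ⟨p, hp⟩ := hs
  have hpw : p <+: w := by
    refine (List.prefix_concat_iff.1 ⟨s, hp⟩).resolve_left fun h => hne ?_
    simpa [h] using hp
  have hones : ones p + ones s = ones w := by simpa [ones_append, ones] using congrArg ones hp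
  have hzeros : zeros p + zeros s = zeros w + 1 := by
    simpa [zeros_append, zeros] using congrArg zeros hp
  have hp_dyck : zeros p ≤ ones p := hw.2 p hpw
  have hw_bal : ones w = zeros w := hw.1
  omega

lemma IsAlphaDyck.ones_lt_zeros_of_suffix {u s : List Bool} (hu : IsAlphaDyck u)
    (hs : s <:+ u) (hne : s ≠ []) (hsu : s ≠ u) : ones s < zeros s := by
  obtain ⟨γ, rfl⟩ := hs
  have hγ : zeros γ < ones γ :=
    hu.2 γ (List.prefix_append γ s) (by rintro rfl; simp at hsu)
      (by simpa using hne)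
  have hu_bal : ones γ + ones s = zeros γ + zeros s := by
    simpa only [ones_append, zeros_append] using hu.1.1
  omega

theorem odd_type7_nonoverlapping_general (n : ℕ) (u A₁ w B : List Bool)
    (hu : IsAlphaDyck u) (hul : u.length = n - 1) (hA : A₁ = true :: u)
    (hw : IsDyck w) (hwl : w.length = n - 1) (hwu : w ≠ u)
    (hB : B = w ++ [false]) : NonOverlapping A₁ B := by
  subst hA hB
  intro s hs
  refine ⟨fun ⟨hpre, _, hsuf, _⟩ => ?_, fun ⟨hpre, hsB, hsuf, hsA⟩ => ?_⟩
  · exact lt_asymm (hu.1.zeros_lt_ones_of_prefix_true_cons hpre hs)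
      (hw.ones_lt_zeros_of_suffix_append_false hsuf hs)
  · have hsw : s <+: w := (List.prefix_concat_iff.1 hpre).resolve_left hsB
    have hsu : s <:+ u := (List.suffix_cons_iff.1 hsuf).resolve_left hsA
    have hsu' : s ≠ u := by
      rintro rfl
      exact hwu (hsw.eq_of_length (hul.trans hwl.symm)).symm
    exact (hw.2 s hsw).not_gt (hu.ones_lt_zeros_of_suffix hsu hs hsu')

/-- n odd, u type α of length n−1, A₁ = 1u; B = w0 with w Dyck of length n−1,
w ≠ u: then A₁ and B are non-overlapping. -/
theorem odd_type7_nonoverlapping (n : ℕ) (hodd : Odd n) (u A₁ w B : List Bool)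
    (hu : IsAlphaDyck u) (hul : u.length = n - 1) (hA : A₁ = true :: u)
    (hw : IsDyck w) (hwl : w.length = n - 1) (hwu : w ≠ u)
    (hB : B = w ++ [false]) : NonOverlapping A₁ B :=
  odd_type7_nonoverlapping_general n u A₁ w B hu hul hA hw hwl hwu hB
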